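/- Suppose the minimizer x* of f is well separated: for every ε > 0, inf{ f(x) : x ∈ X, ‖x − x*‖ ≥ ε } > f(x*). Let x_n : Θ → X be measurable random variables satisfying g_n(x_n(θ))(θ) = min_{x ∈ X} g_n(x)(θ) for every θ (such minimizers exist since g_n is continuous on the compact set X). Then x_n → x* in probability as n → ∞. -/

import Mathlib

/-!
For each fixed `x`, the prior weight `α / (α + n)` vanishes and the strong law of large numbers
gives `g n x → f x` almost surely, hence in probability. All `g n · θ` and `f` are
`L2`-Lipschitz, so a finite `η`-net of the compact set `X` upgrades this to convergence in
probability of `sup_X |g n - f|` to `0`. When that supremum is below `δ / 2`, a minimiser of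
`g n` cannot lie where `f ≥ f x* + δ`, and by well-separatedness this region contains
`{‖x - x*‖ ≥ ε}`.
-/

open MeasureTheory ProbabilityTheory Filter
open Topology NNReal

theorem ContinuousOn.integrable_of_ae_mem {X E : Type*} [TopologicalSpace X] [T2Space X]
    [MeasurableSpace X] [OpensMeasurableSpace X] [NormedAddCommGroup E] {μ : Measure X}
    [IsFiniteMeasureOnCompacts μ] {f : X → E} {K : Set X} (hK : IsCompact K)
    (hf : ContinuousOn f K) (hμK : ∀ᵐ x ∂μ, x ∈ K) : Integrable f μ := by
  simpa only [IntegrableOn, Measure.restrict_eq_self_of_ae_mem hμK] using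
    hf.integrableOn_compact (μ := μ) hK

theorem LipschitzWith.integral {E β : Type*} [PseudoMetricSpace E] [MeasurableSpace β]
    {P : Measure β} [IsProbabilityMeasure P] {K : ℝ≥0} {h : E → β → ℝ}
    (hlip : ∀ ζ, LipschitzWith K (h · ζ)) (hint : ∀ x, Integrable (h x) P) :
    LipschitzWith K fun x => ∫ ζ, h x ζ ∂P := by
  refine LipschitzWith.of_dist_le_mul fun x y => ?_
  rw [dist_eq_norm, ← integral_sub (hint x) (hint y)]
  have hbound : ∀ ζ, ‖h x ζ - h y ζ‖ ≤ K * dist x y := fun ζ => by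
    simpa only [dist_eq_norm] using (hlip ζ).dist_le_mul x y
  simpa using norm_integral_le_of_norm_le_const (μ := P) (Eventually.of_forall hbound)

theorem ae_tendsto_average_comp {Θ β : Type*} [MeasurableSpace Θ] [MeasurableSpace β]
    {μ : Measure Θ} {P : Measure β} {ξ : ℕ → Θ → β} (hξmeas : ∀ i, Measurable (ξ i))
    (hξindep : Pairwise fun i j => IndepFun (ξ i) (ξ j) μ) (hξlaw : ∀ i, μ.map (ξ i) = P)
    {u : β → ℝ} (hu : Measurable u) (huint : Integrable u P) :
    ∀ᵐ θ ∂μ, Tendsto (fun n : ℕ => (∑ i ∈ Finset.range n, u (ξ i θ)) / n) atTop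
      (𝓝 (∫ ζ, u ζ ∂P)) := by
  have hident : ∀ i, IdentDistrib (ξ i) (ξ 0) μ μ := fun i =>
    ⟨(hξmeas i).aemeasurable, (hξmeas 0).aemeasurable, by rw [hξlaw, hξlaw]⟩
  have hint : Integrable (u ∘ ξ 0) μ := by
    rwa [← integrable_map_measure hu.aestronglyMeasurable (hξmeas 0).aemeasurable, hξlaw]
  have hmean : ∫ θ, u (ξ 0 θ) ∂μ = ∫ ζ, u ζ ∂P := by
    rw [← hξlaw 0, integral_map (hξmeas 0).aemeasurable hu.aestronglyMeasurable]
  simpa only [Function.comp_apply, hmean] using strong_law_ae_real (fun i => u ∘ ξ i) hint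
    (fun i j hij => (hξindep hij).comp hu hu) fun i => (hident i).comp hu

/-- With `F₀ x = ∫ h x dP₀` and `H j x = h x ξⱼ`, this is the integral of `h x` against the
Dirichlet-process posterior mean `(α P₀ + ∑ⱼ δ_{ξⱼ}) / (α + n)`. -/
noncomputable def nbroObjective {E : Type*} (α : ℝ) (F₀ : E → ℝ) (H : ℕ → E → ℝ) (n : ℕ)
    (x : E) : ℝ :=
  α / (α + n) * F₀ x + 1 / (α + n) * ∑ j ∈ Finset.range n, H j x

section nbroObjective

variable {E : Type*} {α : ℝ} {F₀ : E → ℝ} {H : ℕ → E → ℝ}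

theorem tendsto_nbroObjective {x : E} {c : ℝ}
    (hH : Tendsto (fun n : ℕ => (∑ j ∈ Finset.range n, H j x) / n) atTop (𝓝 c)) :
    Tendsto (fun n => nbroObjective α F₀ H n x) atTop (𝓝 c) := by
  have hden : Tendsto (fun n : ℕ => α + n) atTop atTop :=
    tendsto_atTop_add_const_left _ α tendsto_natCast_atTop_atTop
  have hprior : Tendsto (fun n : ℕ => α / (α + n)) atTop (𝓝 0) := by
    simpa [div_eq_mul_inv] using hden.inv_tendsto_atTop.const_mul α
  have hdata : Tendsto (fun n : ℕ => n / (α + n)) atTop (𝓝 1) := by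
    have hcompl : Tendsto (fun n : ℕ => 1 - α / (α + n)) atTop (𝓝 1) := by
      simpa using tendsto_const_nhds.sub hprior
    refine hcompl.congr' ?_
    filter_upwards [hden.eventually_ne_atTop 0] with n hn
    field_simp
    ring
  have hlim := (hprior.mul_const (F₀ x)).add (hdata.mul hH)
  rw [zero_mul, zero_add, one_mul] at hlim
  refine hlim.congr' ?_
  filter_upwards [eventually_ne_atTop 0] with n hn
  have hn' : (n : ℝ) ≠ 0 := Nat.cast_ne_zero.mpr hn
  simp only [nbroObjective]
  field_simp

variable [PseudoMetricSpace E] {K : ℝ≥0}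

theorem lipschitzWith_nbroObjective (hα : 0 < α) (hF₀ : LipschitzWith K F₀)
    (hH : ∀ j, LipschitzWith K (H j)) (n : ℕ) :
    LipschitzWith K (nbroObjective α F₀ H n) := by
  have hαn : 0 < α + n := by positivity
  refine LipschitzWith.of_dist_le_mul fun x y => ?_
  calc dist (nbroObjective α F₀ H n x) (nbroObjective α F₀ H n y)
      = |α / (α + n) * (F₀ x - F₀ y)
          + 1 / (α + n) * ∑ j ∈ Finset.range n, (H j x - H j y)| := by
        rw [Real.dist_eq, nbroObjective, nbroObjective, Finset.sum_sub_distrib]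
        ring_nf
    _ ≤ α / (α + n) * |F₀ x - F₀ y|
          + 1 / (α + n) * ∑ j ∈ Finset.range n, |H j x - H j y| := by
        refine (abs_add_le _ _).trans (add_le_add ?_ ?_) <;>
          rw [abs_mul, abs_of_pos (by positivity)]
        exact mul_le_mul_of_nonneg_left (Finset.abs_sum_le_sum_abs _ _) (by positivity)
    _ ≤ α / (α + n) * (K * dist x y)
          + 1 / (α + n) * ∑ j ∈ Finset.range n, K * dist x y := by
        gcongr with j
        · exact hF₀.dist_le_mul x y
        · exact (hH j).dist_le_mul x y
    _ = K * dist x y := by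
        rw [Finset.sum_const, Finset.card_range, nsmul_eq_mul]
        field_simp

end nbroObjective

theorem tendstoInMeasure_nbroObjective {Θ β E : Type*} [MeasurableSpace Θ] [MeasurableSpace β]
    {μ : Measure Θ} [IsFiniteMeasure μ] {P : Measure β} {ξ : ℕ → Θ → β}
    (hξmeas : ∀ i, Measurable (ξ i)) (hξindep : Pairwise fun i j => IndepFun (ξ i) (ξ j) μ)
    (hξlaw : ∀ i, μ.map (ξ i) = P) {α : ℝ} {F₀ : E → ℝ} {h : E → β → ℝ} {x : E}
    (hmeas : Measurable (h x)) (hint : Integrable (h x) P) :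
    TendstoInMeasure μ (fun n θ => nbroObjective α F₀ (fun j x => h x (ξ j θ)) n x) atTop
      fun _ => ∫ ζ, h x ζ ∂P := by
  have hmeas_comp : ∀ j, Measurable fun θ => h x (ξ j θ) := fun j => hmeas.comp (hξmeas j)
  refine tendstoInMeasure_of_tendsto_ae (fun n => Measurable.aestronglyMeasurable ?_) ?_
  · exact measurable_const.add ((Finset.measurable_sum _ fun j _ => hmeas_comp j).const_mul _)
  · filter_upwards [ae_tendsto_average_comp hξmeas hξindep hξlaw hmeas hint] with θ hθ
    exact tendsto_nbroObjective hθ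

/-- The event `{θ | ∃ x ∈ X, …}` need not be measurable; `μ` is evaluated on it as an outer
measure. -/
def TendstoUniformlyOnInMeasure {Θ E F : Type*} [MeasurableSpace Θ] [Dist F] (μ : Measure Θ)
    (G : ℕ → E → Θ → F) (f : E → F) (X : Set E) : Prop :=
  ∀ c > (0 : ℝ), Tendsto (fun n => μ {θ | ∃ x ∈ X, c ≤ dist (G n x θ) (f x)}) atTop (𝓝 0)

theorem exists_half_le_dist_of_isMinOn {E : Type*} {X : Set E} {f g : E → ℝ} {x₀ x : E}
    {δ : ℝ} (hmin : IsMinOn g X x) (hx : x ∈ X) (hx₀ : x₀ ∈ X) (hgap : f x₀ + δ ≤ f x) :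
    ∃ y ∈ X, δ / 2 ≤ dist (g y) (f y) := by
  by_contra! hclose
  simp only [Real.dist_eq, abs_sub_lt_iff] at hclose
  have hx_close := hclose x hx
  have hx₀_close := hclose x₀ hx₀
  have hle := isMinOn_iff.mp hmin x₀ hx₀
  linarith

theorem tendstoUniformlyOnInMeasure_of_lipschitzWith {Θ E F : Type*} [MeasurableSpace Θ]
    [PseudoMetricSpace E] [PseudoMetricSpace F] {μ : Measure Θ} {X : Set E} (hX : IsCompact X)
    {K : ℝ≥0} {G : ℕ → E → Θ → F} {f : E → F} (hf : LipschitzWith K f)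
    (hG : ∀ n θ, LipschitzWith K (G n · θ))
    (hGf : ∀ x ∈ X, TendstoInMeasure μ (fun n => G n x) atTop fun _ => f x) :
    TendstoUniformlyOnInMeasure μ G f X := by
  intro c hc
  obtain ⟨η, hη, hKη⟩ := exists_pos_mul_lt (by positivity : 0 < c / 4) (K : ℝ)
  obtain ⟨t, htX, hcover⟩ :=
    hX.elim_nhds_subcover (Metric.ball · η) fun x _ => Metric.ball_mem_nhds x hη
  have hsub : ∀ n, {θ | ∃ x ∈ X, c ≤ dist (G n x θ) (f x)}
      ⊆ ⋃ y ∈ t, {θ | c / 2 ≤ dist (G n y θ) (f y)} := by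
    rintro n θ ⟨x, hx, hcx⟩
    obtain ⟨y, hy, hxy⟩ := Set.mem_iUnion₂.mp (hcover hx)
    have hKxy : K * dist x y ≤ K * η := mul_le_mul_of_nonneg_left (le_of_lt hxy) K.coe_nonneg
    have hGxy := (hG n θ).dist_le_mul x y
    have hfxy := hf.dist_le_mul y x
    rw [dist_comm y x] at hfxy
    have htri := dist_triangle4 (G n x θ) (G n y θ) (f y) (f x)
    exact Set.mem_biUnion hy (by simp only [Set.mem_ofPred_eq]; linarith)
  have hsum := tendsto_finsetSum t fun y hy =>
    tendstoInMeasure_iff_dist.mp (hGf y (htX y hy)) (c / 2) (by positivity)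
  rw [Finset.sum_const_zero] at hsum
  exact tendsto_of_tendsto_of_tendsto_of_le_of_le tendsto_const_nhds hsum (fun _ => zero_le)
    fun n => (measure_mono (hsub n)).trans (measure_biUnion_finset_le t _)

theorem TendstoUniformlyOnInMeasure.tendstoInMeasure_of_isMinOn {Θ E : Type*}
    [MeasurableSpace Θ] [PseudoMetricSpace E] {μ : Measure Θ} {X : Set E} {G : ℕ → E → Θ → ℝ}
    {f : E → ℝ} (hunif : TendstoUniformlyOnInMeasure μ G f X) {x₀ : E} (hx₀ : x₀ ∈ X)
    (hsep : ∀ ε > (0 : ℝ), ∃ δ > (0 : ℝ), ∀ x ∈ X, ε ≤ dist x x₀ → f x₀ + δ ≤ f x)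
    {xn : ℕ → Θ → E} (hxnX : ∀ n θ, xn n θ ∈ X) (hxnmin : ∀ n θ, IsMinOn (G n · θ) X (xn n θ)) :
    TendstoInMeasure μ xn atTop fun _ => x₀ := by
  rw [tendstoInMeasure_iff_dist]
  intro ε hε
  obtain ⟨δ, hδ, hgap⟩ := hsep ε hε
  have hsub : ∀ n, {θ | ε ≤ dist (xn n θ) x₀} ⊆ {θ | ∃ x ∈ X, δ / 2 ≤ dist (G n x θ) (f x)} :=
    fun n θ hθ => exists_half_le_dist_of_isMinOn (hxnmin n θ) (hxnX n θ) hx₀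
      (hgap _ (hxnX n θ) hθ)
  exact tendsto_of_tendsto_of_tendsto_of_le_of_le tendsto_const_nhds (hunif _ (half_pos hδ))
    (fun _ => zero_le) fun n => measure_mono (hsub n)

theorem nbro_solution_consistency_general
    {l d : ℕ} {Θ : Type*} [MeasurableSpace Θ]
    (μ : Measure Θ) [IsProbabilityMeasure μ]
    (Ω : Set (EuclideanSpace ℝ (Fin l))) (hΩ : IsCompact Ω)
    (Pc : Measure (EuclideanSpace ℝ (Fin l))) [IsProbabilityMeasure Pc]
    (hPcΩ : Pc Ωᶜ = 0)
    (ξ : ℕ → Θ → EuclideanSpace ℝ (Fin l))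
    (hξmeas : ∀ i, Measurable (ξ i))
    (hξindep : iIndepFun ξ μ)
    (hξlaw : ∀ i, Measure.map (ξ i) μ = Pc)
    (X : Set (EuclideanSpace ℝ (Fin d))) (hX : IsCompact X)
    (h : EuclideanSpace ℝ (Fin d) → EuclideanSpace ℝ (Fin l) → ℝ)
    (L1 L2 : ℝ)
    (hLip1 : ∀ x ζ₁ ζ₂, |h x ζ₁ - h x ζ₂| ≤ L1 * ‖ζ₁ - ζ₂‖)
    (hLip2 : ∀ x₁ x₂ ζ, |h x₁ ζ - h x₂ ζ| ≤ L2 * ‖x₁ - x₂‖)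
    (α : ℝ) (hα : 0 < α)
    (P0 : Measure (EuclideanSpace ℝ (Fin l))) [IsProbabilityMeasure P0]
    (hP0Ω : P0 Ωᶜ = 0)
    (g : ℕ → EuclideanSpace ℝ (Fin d) → Θ → ℝ)
    (hg : ∀ n x θ, g n x θ =
      (α / (α + n)) * (∫ ζ, h x ζ ∂P0)
        + (1 / (α + n)) * ∑ j ∈ Finset.range n, h x (ξ j θ))
    (f : EuclideanSpace ℝ (Fin d) → ℝ)
    (hf : ∀ x, f x = ∫ ζ, h x ζ ∂Pc)
    (xstar : EuclideanSpace ℝ (Fin d)) (hxstar : xstar ∈ X)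
    (hsep : ∀ ε > (0 : ℝ), ∃ δ > (0 : ℝ), ∀ x ∈ X, ε ≤ ‖x - xstar‖ → f xstar + δ ≤ f x)
    (xn : ℕ → Θ → EuclideanSpace ℝ (Fin d))
    (hxnX : ∀ n θ, xn n θ ∈ X)
    (hxnmin : ∀ n θ, ∀ x ∈ X, g n (xn n θ) θ ≤ g n x θ) :
    TendstoInMeasure μ xn atTop (fun _ => xstar) := by
  obtain rfl : f = fun x => ∫ ζ, h x ζ ∂Pc := funext hf
  obtain rfl : g = fun n x θ => nbroObjective α (fun x => ∫ ζ, h x ζ ∂P0)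
      (fun j x => h x (ξ j θ)) n x := funext fun n => funext fun x => funext (hg n x)
  have hlip : ∀ ζ, LipschitzWith L2.toNNReal (h · ζ) := fun ζ =>
    LipschitzWith.of_dist_le' fun x₁ x₂ => by
      rw [Real.dist_eq, dist_eq_norm]
      exact hLip2 x₁ x₂ ζ
  have hcont : ∀ x, Continuous (h x) := fun x =>
    (LipschitzWith.of_dist_le' fun ζ₁ ζ₂ => by
      rw [Real.dist_eq, dist_eq_norm]
      exact hLip1 x ζ₁ ζ₂ :
      LipschitzWith L1.toNNReal (h x)).continuous
  have hint : ∀ (P : Measure _) [IsFiniteMeasure P], P Ωᶜ = 0 → ∀ x, Integrable (h x) P :=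
    fun P _ hP x => (hcont x).continuousOn.integrable_of_ae_mem hΩ (ae_iff.mpr hP)
  have hunif := tendstoUniformlyOnInMeasure_of_lipschitzWith hX
    (LipschitzWith.integral hlip (hint Pc hPcΩ))
    (fun n θ => lipschitzWith_nbroObjective hα (LipschitzWith.integral hlip (hint P0 hP0Ω))
      (fun j => hlip (ξ j θ)) n)
    fun x _ => tendstoInMeasure_nbroObjective hξmeas (fun i j hij => hξindep.indepFun hij)
      hξlaw (hcont x).measurable (hint Pc hPcΩ x)
  exact hunif.tendstoInMeasure_of_isMinOn hxstar (by simpa only [dist_eq_norm] using hsep) hxnX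
    fun n θ => isMinOn_iff.mpr (hxnmin n θ)

/-- Theorem 1(ii): consistency of the NBRO optimal solution. -/
theorem nbro_solution_consistency
    {l d : ℕ} {Θ : Type*} [MeasurableSpace Θ]
    (μ : Measure Θ) [IsProbabilityMeasure μ]
    (Ω : Set (EuclideanSpace ℝ (Fin l))) (hΩ : IsCompact Ω)
    (Pc : Measure (EuclideanSpace ℝ (Fin l))) [IsProbabilityMeasure Pc]
    (hPcΩ : Pc Ωᶜ = 0)
    (ξ : ℕ → Θ → EuclideanSpace ℝ (Fin l))
    (hξmeas : ∀ i, Measurable (ξ i))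
    (hξindep : iIndepFun ξ μ)
    (hξlaw : ∀ i, Measure.map (ξ i) μ = Pc)
    (hξΩ : ∀ i θ, ξ i θ ∈ Ω)
    (X : Set (EuclideanSpace ℝ (Fin d))) (hX : IsCompact X)
    (h : EuclideanSpace ℝ (Fin d) → EuclideanSpace ℝ (Fin l) → ℝ)
    (L1 L2 : ℝ) (hL1 : 0 < L1) (hL2 : 0 < L2)
    (hLip1 : ∀ x ζ₁ ζ₂, |h x ζ₁ - h x ζ₂| ≤ L1 * ‖ζ₁ - ζ₂‖)
    (hLip2 : ∀ x₁ x₂ ζ, |h x₁ ζ - h x₂ ζ| ≤ L2 * ‖x₁ - x₂‖)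
    (α : ℝ) (hα : 0 < α)
    (P0 : Measure (EuclideanSpace ℝ (Fin l))) [IsProbabilityMeasure P0]
    (hP0Ω : P0 Ωᶜ = 0)
    (g : ℕ → EuclideanSpace ℝ (Fin d) → Θ → ℝ)
    (hg : ∀ n x θ, g n x θ =
      (α / (α + n)) * (∫ ζ, h x ζ ∂P0)
        + (1 / (α + n)) * ∑ j ∈ Finset.range n, h x (ξ j θ))
    (f : EuclideanSpace ℝ (Fin d) → ℝ)
    (hf : ∀ x, f x = ∫ ζ, h x ζ ∂Pc)
    (xstar : EuclideanSpace ℝ (Fin d)) (hxstar : xstar ∈ X)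
    (hmin : ∀ x ∈ X, f xstar ≤ f x)
    (hsep : ∀ ε > (0 : ℝ), ∃ δ > (0 : ℝ), ∀ x ∈ X, ε ≤ ‖x - xstar‖ → f xstar + δ ≤ f x)
    (xn : ℕ → Θ → EuclideanSpace ℝ (Fin d))
    (hxnmeas : ∀ n, Measurable (xn n))
    (hxnX : ∀ n θ, xn n θ ∈ X)
    (hxnmin : ∀ n θ, ∀ x ∈ X, g n (xn n θ) θ ≤ g n x θ) :
    TendstoInMeasure μ xn atTop (fun _ => xstar) :=
  nbro_solution_consistency_general μ Ω hΩ Pc hPcΩ ξ hξmeas hξindep hξlaw X hX h L1 L2 hLip1 hLip2 α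
    hα P0 hP0Ω g hg f hf xstar hxstar hsep xn hxnX hxnmin
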